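/- Let f : ℝ^m → ℝ^k be a surjective ℝ-linear map such that m − k is even, and let 𝔥 be a ℂ-linear subspace of ℂ^k such that Re restricted to 𝔥 is injective. Then there exists a ℂ-linear subspace 𝔥′ of ℂ^m with the following properties: (i) Re restricted to 𝔥′ is injective; (ii) the complexification f^ℂ : ℂ^m → ℂ^k of f maps 𝔥′ onto 𝔥; (iii) ker f ⊆ Re(𝔥′); and (iv) f induces an ℝ-linear isomorphism ℝ^m/Re(𝔥′) ≅ ℝ^k/Re(𝔥). -/

import Mathlib

/-- The real-part projection `ℂ^m → ℝ^m`, as an `ℝ`-linear map. -/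
noncomputable def reLinear (m : ℕ) : (Fin m → ℂ) →ₗ[ℝ] (Fin m → ℝ) :=
  LinearMap.pi fun i => Complex.reLm.comp (LinearMap.proj (R := ℝ) i)

/-- `Re(𝔥)` as a real subspace of `ℝ^m`. -/
noncomputable def reSub {m : ℕ} (𝔥 : Submodule ℂ (Fin m → ℂ)) : Submodule ℝ (Fin m → ℝ) :=
  (𝔥.restrictScalars ℝ).map (reLinear m)

/-- The complexification `f^ℂ : ℂ^m → ℂ^k` of an `ℝ`-linear map `f : ℝ^m → ℝ^k`:
`f^ℂ(u + √−1 v) = f(u) + √−1 f(v)`. -/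
noncomputable def complexify {m k : ℕ} (f : (Fin m → ℝ) →ₗ[ℝ] (Fin k → ℝ))
    (w : Fin m → ℂ) : Fin k → ℂ :=
  fun j => ((f (fun i => (w i).re)) j : ℂ) + Complex.I * ((f (fun i => (w i).im)) j : ℂ)

/-!
Choose a section `s` of `f` and, since `ker f` has even dimension `2n`, an `ℝ`-linear isomorphism
`g : ℂⁿ ≃ ker f`. Every `ℝ`-linear map `G : W → ℝ^m` on a complex space is the real part of a
unique `ℂ`-linear map `complexLift G : W → ℂ^m`, and `Re` is injective on its image when `G` is.
For `G (h, w) = s (Re h) + g w` on `𝔥 × ℂⁿ`, the image `𝔥′` of `complexLift G` has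
`Re(𝔥′) = s(Re 𝔥) + ker f = f⁻¹(Re 𝔥)`, while `f^ℂ ∘ complexLift G = complexLift (f ∘ G)` is the
projection onto `𝔥`.
-/

open Complex

theorem coe_reLinear (m : ℕ) : ⇑(reLinear m) = fun w i => (w i).re := rfl

section complexLift

variable {V : Type*} [AddCommGroup V] [Module ℝ V] [Module ℂ V] [IsScalarTower ℝ ℂ V] {m : ℕ}

theorem smul_eq_re_smul_add_im_smul_I_smul (c : ℂ) (x : V) :
    c • x = c.re • x + c.im • (I • x) := by
  conv_lhs => rw [← re_add_im c]
  simp only [add_smul, mul_smul, ← coe_algebraMap, algebraMap_smul]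

/-- Since `Im z = -Re (I * z)`, this is the only `ℂ`-linear map whose real part is `g`. -/
noncomputable def complexLift (g : V →ₗ[ℝ] (Fin m → ℝ)) : V →ₗ[ℂ] (Fin m → ℂ) where
  toFun x i := g x i - I * g (I • x) i
  map_add' x y := by
    funext i
    simp only [smul_add, map_add, Pi.add_apply, ofReal_add]
    ring
  map_smul' c x := by
    funext i
    have hx := smul_eq_re_smul_add_im_smul_I_smul c x
    have hIx : I • c • x = c.re • (I • x) - c.im • x := by
      rw [hx, smul_add, smul_comm I c.re, smul_comm I c.im, smul_smul I I, I_mul_I, neg_one_smul,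
        smul_neg, sub_eq_add_neg]
    rw [hIx, hx]
    simp only [map_add, map_sub, map_smul, Pi.add_apply, Pi.sub_apply, Pi.smul_apply, smul_eq_mul,
      RingHom.id_apply, ofReal_add, ofReal_sub, ofReal_mul]
    conv_rhs => rw [← re_add_im c]
    linear_combination ((c.im : ℂ) * g (I • x) i) * I_mul_I

@[simp] theorem reLinear_complexLift (g : V →ₗ[ℝ] (Fin m → ℝ)) (x : V) :
    reLinear m (complexLift g x) = g x := by
  funext i
  simp [complexLift, reLinear]

theorem complexLift_reLinear_comp (L : V →ₗ[ℂ] (Fin m → ℂ)) :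
    complexLift ((reLinear m).comp (L.restrictScalars ℝ)) = L := by
  ext x i
  simp [complexLift, reLinear, mul_comm I]

theorem complexLift_comp {k : ℕ} (f : (Fin m → ℝ) →ₗ[ℝ] (Fin k → ℝ)) (g : V →ₗ[ℝ] (Fin m → ℝ)) :
    complexLift (f ∘ₗ reLinear m) ∘ₗ complexLift g = complexLift (f ∘ₗ g) := by
  rw [← complexLift_reLinear_comp (complexLift (f ∘ₗ reLinear m) ∘ₗ complexLift g)]
  congr 1
  ext x
  simp

theorem injOn_reLinear_range_complexLift {g : V →ₗ[ℝ] (Fin m → ℝ)} (hg : Function.Injective g) :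
    Set.InjOn (reLinear m) (LinearMap.range (complexLift g) : Set (Fin m → ℂ)) := by
  rintro _ ⟨x, rfl⟩ _ ⟨y, rfl⟩ hxy
  simp only [reLinear_complexLift] at hxy
  rw [hg hxy]

theorem reLinear_comp_complexLift (g : V →ₗ[ℝ] (Fin m → ℝ)) :
    reLinear m ∘ₗ (complexLift g).restrictScalars ℝ = g :=
  LinearMap.ext (reLinear_complexLift g)

theorem reSub_range (L : V →ₗ[ℂ] (Fin m → ℂ)) :
    reSub (LinearMap.range L) = LinearMap.range (reLinear m ∘ₗ L.restrictScalars ℝ) := by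
  rw [reSub, ← LinearMap.range_restrictScalars, LinearMap.range_comp]

end complexLift

theorem coe_complexLift_comp_reLinear {m k : ℕ} (f : (Fin m → ℝ) →ₗ[ℝ] (Fin k → ℝ)) :
    ⇑(complexLift (f ∘ₗ reLinear m)) = complexify f := by
  funext w j
  have hIm : reLinear m (I • w) = -fun i => (w i).im := by
    funext i
    simp [coe_reLinear]
  simp only [complexLift, LinearMap.coe_mk, AddHom.coe_mk, LinearMap.comp_apply, hIm, map_neg]
  simp [complexify, coe_reLinear]

theorem exists_injective_range_eq_of_finrank_eq_two_mul {E : Type*} [AddCommGroup E] [Module ℝ E]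
    [FiniteDimensional ℝ E] {K : Submodule ℝ E} {n : ℕ} (hK : Module.finrank ℝ K = 2 * n) :
    ∃ g : (Fin n → ℂ) →ₗ[ℝ] E, Function.Injective g ∧ LinearMap.range g = K := by
  have hdim : Module.finrank ℝ K = Module.finrank ℝ (Fin n → ℂ) := by
    simp [hK, Module.finrank_pi_fintype, mul_comm]
  let e := LinearEquiv.ofFinrankEq K (Fin n → ℂ) hdim
  refine ⟨K.subtype ∘ₗ e.symm.toLinearMap, K.injective_subtype.comp e.symm.injective, ?_⟩
  rw [LinearMap.range_comp_of_range_eq_top _ e.symm.range, K.range_subtype]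

theorem finrank_ker_of_surjective {m k : ℕ} {f : (Fin m → ℝ) →ₗ[ℝ] (Fin k → ℝ)}
    (hf : Function.Surjective f) : Module.finrank ℝ (LinearMap.ker f) = m - k := by
  have := f.finrank_range_add_finrank_ker
  rw [LinearMap.range_eq_top.2 hf, finrank_top] at this
  simp only [Module.finrank_fin_fun] at this
  omega

section sectionCoprod

variable {W : Type*} [AddCommGroup W] [Module ℝ W] [Module ℂ W] [IsScalarTower ℝ ℂ W] {m k : ℕ}
  (𝔥 : Submodule ℂ (Fin k → ℂ)) (s : (Fin k → ℝ) →ₗ[ℝ] (Fin m → ℝ)) (g : W →ₗ[ℝ] (Fin m → ℝ))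

noncomputable def sectionCoprod : 𝔥 × W →ₗ[ℝ] (Fin m → ℝ) :=
  (s ∘ₗ reLinear k ∘ₗ 𝔥.subtype.restrictScalars ℝ).coprod g

variable {𝔥 s g} {f : (Fin m → ℝ) →ₗ[ℝ] (Fin k → ℝ)}

theorem comp_sectionCoprod (hs : f ∘ₗ s = LinearMap.id) (hg : f ∘ₗ g = 0) :
    f ∘ₗ sectionCoprod 𝔥 s g
      = reLinear k ∘ₗ (𝔥.subtype ∘ₗ LinearMap.fst ℂ 𝔥 W).restrictScalars ℝ := by
  apply LinearMap.ext
  rintro ⟨h, w⟩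
  have hsh : f (s (reLinear k h)) = reLinear k h := LinearMap.congr_fun hs _
  have hgw : f (g w) = 0 := LinearMap.congr_fun hg w
  simp [sectionCoprod, hsh, hgw]

theorem injective_sectionCoprod (hre : Set.InjOn (reLinear k) (𝔥 : Set (Fin k → ℂ)))
    (hs : f ∘ₗ s = LinearMap.id) (hg : f ∘ₗ g = 0) (hg_inj : Function.Injective g) :
    Function.Injective (sectionCoprod 𝔥 s g) := by
  rw [← LinearMap.ker_eq_bot, LinearMap.ker_eq_bot']
  rintro ⟨h, w⟩ hzero
  have hre_h : reLinear k h = 0 := by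
    have := LinearMap.congr_fun (comp_sectionCoprod hs hg) (h, w)
    simpa [hzero] using this.symm
  have h0 : h = 0 := Subtype.ext (hre h.2 𝔥.zero_mem (by simp [hre_h]))
  have hw : g w = 0 := by simpa [sectionCoprod, h0] using hzero
  rw [h0, hg_inj (hw.trans g.map_zero.symm)]
  rfl

end sectionCoprod

theorem exists_lifted_subspace_of_range_eq_ker {W : Type*} [AddCommGroup W] [Module ℝ W]
    [Module ℂ W] [IsScalarTower ℝ ℂ W] {m k : ℕ} {f : (Fin m → ℝ) →ₗ[ℝ] (Fin k → ℝ)}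
    (hf : Function.Surjective f) {g : W →ₗ[ℝ] (Fin m → ℝ)} (hg_inj : Function.Injective g)
    (hg : LinearMap.range g = LinearMap.ker f) {𝔥 : Submodule ℂ (Fin k → ℂ)}
    (hre : Set.InjOn (reLinear k) (𝔥 : Set (Fin k → ℂ))) :
    ∃ 𝔥' : Submodule ℂ (Fin m → ℂ),
      Set.InjOn (reLinear m) (𝔥' : Set (Fin m → ℂ)) ∧
      complexify f '' (𝔥' : Set (Fin m → ℂ)) = (𝔥 : Set (Fin k → ℂ)) ∧
      LinearMap.ker f ≤ reSub 𝔥' ∧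
      LinearMap.ker ((reSub 𝔥).mkQ.comp f) = reSub 𝔥' ∧
      Function.Surjective ((reSub 𝔥).mkQ.comp f) := by
  obtain ⟨s, hs⟩ := f.exists_rightInverse_of_surjective (LinearMap.range_eq_top.2 hf)
  have hfg : f ∘ₗ g = 0 := LinearMap.range_le_ker_iff.1 hg.le
  set G := sectionCoprod 𝔥 s g
  set L := 𝔥.subtype ∘ₗ LinearMap.fst ℂ 𝔥 W
  have hL : LinearMap.range L = 𝔥 := by
    rw [LinearMap.range_comp_of_range_eq_top _ (LinearMap.range_eq_top.2 LinearMap.fst_surjective),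
      𝔥.range_subtype]
  have hfG : f ∘ₗ G = reLinear k ∘ₗ L.restrictScalars ℝ := comp_sectionCoprod hs hfg
  have hker : LinearMap.ker f ≤ LinearMap.range G :=
    hg ▸ le_sup_right.trans (LinearMap.range_coprod _ g).ge
  have hreSub : reSub (LinearMap.range (complexLift G)) = LinearMap.range G := by
    rw [reSub_range, reLinear_comp_complexLift]
  refine ⟨LinearMap.range (complexLift G),
    injOn_reLinear_range_complexLift (injective_sectionCoprod hre hs hfg hg_inj), ?_,
    hreSub ▸ hker, ?_, (Submodule.mkQ_surjective _).comp hf⟩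
  · rw [← coe_complexLift_comp_reLinear, ← Submodule.map_coe, ← LinearMap.range_comp,
      complexLift_comp, hfG, complexLift_reLinear_comp, hL]
  · have hreSub𝔥 : reSub 𝔥 = (LinearMap.range G).map f := by
      rw [← LinearMap.range_comp, hfG, ← reSub_range, hL]
    rw [LinearMap.ker_comp, Submodule.ker_mkQ, hreSub𝔥, Submodule.comap_map_eq,
      sup_eq_left.2 hker, hreSub]

/-- Let `f : ℝ^m → ℝ^k` be a surjective linear map with `m − k` even and
`𝔥 ⊆ ℂ^k` a complex subspace on which `Re` is injective. Then there is a complex subspace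
`𝔥′ ⊆ ℂ^m` such that: (i) `Re` is injective on `𝔥′`; (ii) `f^ℂ` maps `𝔥′` onto `𝔥`;
(iii) `ker f ⊆ Re(𝔥′)`; and (iv) `f` induces an isomorphism `ℝ^m/Re(𝔥′) ≅ ℝ^k/Re(𝔥)`
(i.e. `q ∘ f : ℝ^m → ℝ^k/Re(𝔥)` is surjective with kernel `Re(𝔥′)`). -/
theorem exists_lifted_subspace {m k : ℕ}
    (f : (Fin m → ℝ) →ₗ[ℝ] (Fin k → ℝ)) (hf : Function.Surjective f)
    (heven : Even (m - k))
    (𝔥 : Submodule ℂ (Fin k → ℂ))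
    (hre : Set.InjOn (reLinear k) (𝔥 : Set (Fin k → ℂ))) :
    ∃ 𝔥' : Submodule ℂ (Fin m → ℂ),
      Set.InjOn (reLinear m) (𝔥' : Set (Fin m → ℂ)) ∧
      complexify f '' (𝔥' : Set (Fin m → ℂ)) = (𝔥 : Set (Fin k → ℂ)) ∧
      LinearMap.ker f ≤ reSub 𝔥' ∧
      LinearMap.ker ((reSub 𝔥).mkQ.comp f) = reSub 𝔥' ∧
      Function.Surjective ((reSub 𝔥).mkQ.comp f) := by
  obtain ⟨n, hn⟩ := heven.exists_two_nsmul
  obtain ⟨g, hg_inj, hg⟩ := exists_injective_range_eq_of_finrank_eq_two_mul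
    ((finrank_ker_of_surjective hf).trans hn)
  exact exists_lifted_subspace_of_range_eq_ker hf hg_inj hg hre
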